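/- Let B be a block containing exactly y ones and exactly y + 2 zeros (in any arrangement), for some y ≥ 0. Then p(B) = p(B)^1; that is, the number of permutations of [2y+2] with pinnacle set P_B equals the number of rearrangements of {1, …, 2y+2, 2y+3} whose pinnacle set is P_B ∪ {2y+3}. -/

import Mathlib

/-- The pinnacle multiset of a finite sequence `w` (given as a list, possibly with
repeated entries): the multiset of values `w t` at interior positions `t` with
`w (t-1) < w t > w (t+1)`. -/
def pinMultiset (w : List ℕ) : Multiset ℕ :=
  ↑(((List.range w.length).filter (fun t =>
      decide (0 < t ∧ t + 1 < w.length ∧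
        w.getD (t - 1) 0 < w.getD t 0 ∧ w.getD (t + 1) 0 < w.getD t 0))).map
    (fun t => w.getD t 0))

/-- `P_B`: the set (as a multiset, with no repetitions) of 1-indexed positions of the
entries of the block `B` that are equal to 1 (`true`). -/
def blockPins (B : List Bool) : Multiset ℕ :=
  ↑(((List.range B.length).filter (fun t => B.getD t false)).map (fun t => t + 1))

/-- `pB B i j` is `p(B)^i_j`: the number of rearrangements `w` of the multiset
`{1, …, m} ⊎ {j copies of 0} ⊎ {i copies of m+1}` (where `m` is the length of block `B`)
whose pinnacle multiset is `P_B ⊎ {i copies of m+1}` and in which no two entries equal to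
`0` are adjacent. -/
noncomputable def pB (B : List Bool) (i j : ℕ) : ℕ :=
  {w : List ℕ |
    w.Perm (List.range' 1 B.length ++ List.replicate j 0 ++
      List.replicate i (B.length + 1)) ∧
    pinMultiset w = blockPins B + Multiset.replicate i (B.length + 1) ∧
    ∀ t : ℕ, t + 1 < w.length → ¬(w.getD t 0 = 0 ∧ w.getD (t + 1) 0 = 0)}.ncard

/-!
A permutation `u` of `[2y+2]` with `y` pinnacles has them at non-adjacent positions among the
`2y` interior ones, so the `2y` gaps directly before and after a pinnacle are distinct and leave
exactly one of the `2y+1` interior gaps free. Inserting the new maximum `2y+3` into a gap makes it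
a pinnacle and kills the pinnacles next to it, so it gives pinnacle set `P_B ∪ {2y+3}` exactly
when inserted into the free gap. Conversely, deleting the maximum from an arrangement counted by
`p(B)^1` can only add pinnacles to `P_B`, and a permutation of `[2y+2]` has at most `y` of them.
Hence deleting the maximum is a bijection.
-/

open Finset

def IsPinnacleAt (w : List ℕ) (t : ℕ) : Prop :=
  0 < t ∧ t + 1 < w.length ∧ w.getD (t - 1) 0 < w.getD t 0 ∧ w.getD (t + 1) 0 < w.getD t 0

instance (w : List ℕ) (t : ℕ) : Decidable (IsPinnacleAt w t) := by
  unfold IsPinnacleAt; infer_instance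

def pinSet (w : List ℕ) : Finset ℕ := {t ∈ range w.length | IsPinnacleAt w t}

lemma mem_pinSet {w : List ℕ} {t : ℕ} : t ∈ pinSet w ↔ IsPinnacleAt w t := by
  simp only [pinSet, mem_filter, mem_range, and_iff_right_iff_imp]
  exact fun h => by have := h.2.1; omega

lemma pinMultiset_eq_map_pinSet (w : List ℕ) :
    pinMultiset w = (pinSet w).val.map (w.getD · 0) := by
  rw [pinMultiset, pinSet, filter_val, range_val, Multiset.range, Multiset.filter_coe,
    Multiset.map_coe]
  rfl

lemma card_pinMultiset (w : List ℕ) : Multiset.card (pinMultiset w) = #(pinSet w) := by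
  rw [pinMultiset_eq_map_pinSet, Multiset.card_map, card_def]

lemma IsPinnacleAt.not_succ {w : List ℕ} {t : ℕ} (h : IsPinnacleAt w t) :
    ¬IsPinnacleAt w (t + 1) := by
  rintro ⟨-, -, hlt, -⟩
  rw [Nat.add_sub_cancel] at hlt
  exact lt_asymm h.2.2.2 hlt

lemma pinSet_subset_Icc (w : List ℕ) : pinSet w ⊆ Icc 1 (w.length - 2) := by
  intro t ht
  obtain ⟨h0, hlen, -⟩ := mem_pinSet.1 ht
  rw [mem_Icc]
  omega

section NonConsecutive

variable {S : Finset ℕ} {n : ℕ}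

lemma card_union_image_succ (hcons : ∀ t ∈ S, t + 1 ∉ S) :
    #(S ∪ S.image (· + 1)) = 2 * #S := by
  have hdisj : Disjoint S (S.image (· + 1)) := by
    rw [disjoint_right]
    rintro _ ht hs
    obtain ⟨t, ht', rfl⟩ := mem_image.1 ht
    exact hcons t ht' hs
  rw [card_union_of_disjoint hdisj, card_image_of_injective _ (add_left_injective 1), two_mul]

lemma union_image_succ_subset (hS : S ⊆ Icc 1 n) : S ∪ S.image (· + 1) ⊆ Icc 1 (n + 1) := by
  intro k hk
  rcases mem_union.1 hk with hk | hk
  · have := mem_Icc.1 (hS hk); rw [mem_Icc]; omega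
  · obtain ⟨t, ht, rfl⟩ := mem_image.1 hk
    have := mem_Icc.1 (hS ht); rw [mem_Icc]; omega

lemma two_mul_card_le_of_not_consecutive (hS : S ⊆ Icc 1 n) (hcons : ∀ t ∈ S, t + 1 ∉ S) :
    2 * #S ≤ n + 1 := by
  simpa [card_union_image_succ hcons] using card_le_card (union_image_succ_subset hS)

lemma existsUnique_gap_of_not_consecutive (hS : S ⊆ Icc 1 n) (hcons : ∀ t ∈ S, t + 1 ∉ S)
    (hcard : 2 * #S = n) : ∃! k, k ∈ Icc 1 (n + 1) ∧ k - 1 ∉ S ∧ k ∉ S := by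
  have hgap : ∀ k, k ∈ Icc 1 (n + 1) \ (S ∪ S.image (· + 1)) ↔
      k ∈ Icc 1 (n + 1) ∧ k - 1 ∉ S ∧ k ∉ S := by
    intro k
    simp only [mem_sdiff, mem_union, mem_image, mem_Icc]
    constructor
    · rintro ⟨hk, hn⟩
      exact ⟨hk, fun h => hn (Or.inr ⟨k - 1, h, by omega⟩), fun h => hn (Or.inl h)⟩
    · rintro ⟨hk, h1, h2⟩
      refine ⟨hk, ?_⟩
      rintro (h | ⟨t, ht, rfl⟩)
      exacts [h2 h, h1 (by simpa using ht)]
  obtain ⟨k, hk⟩ : ∃ k, Icc 1 (n + 1) \ (S ∪ S.image (· + 1)) = {k} := by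
    rw [← card_eq_one, card_sdiff_of_subset (union_image_succ_subset hS),
      card_union_image_succ hcons, Nat.card_Icc]
    omega
  refine ⟨k, (hgap k).1 (by simp [hk]), fun j hj => ?_⟩
  simpa [hk] using (hgap j).2 hj

end NonConsecutive

lemma card_pinSet_le {w : List ℕ} {y : ℕ} (h : w.length ≤ 2 * y + 2) : #(pinSet w) ≤ y := by
  have := two_mul_card_le_of_not_consecutive (pinSet_subset_Icc w)
    fun t ht => mem_pinSet.not.2 (mem_pinSet.1 ht).not_succ
  omega

/-- A slot `k` of `u` (the gap before `u[k]`) is free if a new maximum inserted there is a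
pinnacle without destroying a pinnacle of `u`. -/
def IsFreeSlot (u : List ℕ) (k : ℕ) : Prop :=
  0 < k ∧ k < u.length ∧ ¬IsPinnacleAt u (k - 1) ∧ ¬IsPinnacleAt u k

lemma existsUnique_isFreeSlot {u : List ℕ} (h : u.length = 2 * #(pinSet u) + 2) :
    ∃! k, IsFreeSlot u k := by
  have := existsUnique_gap_of_not_consecutive (pinSet_subset_Icc u)
    (fun t ht => mem_pinSet.not.2 (mem_pinSet.1 ht).not_succ) (by omega)
  refine (existsUnique_congr fun k => ?_).1 this
  have hrange : (1 ≤ k ∧ k ≤ u.length - 2 + 1) ↔ (0 < k ∧ k < u.length) := by omega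
  simp only [mem_Icc, mem_pinSet, IsFreeSlot, hrange, and_assoc]

def succAbove (k t : ℕ) : ℕ := if t < k then t else t + 1

lemma succAbove_injective (k : ℕ) : (succAbove k).Injective := by
  intro s t h
  unfold succAbove at h
  split_ifs at h <;> omega

lemma exists_succAbove_eq {k t : ℕ} (h : t ≠ k) : ∃ s, succAbove k s = t :=
  ⟨if t < k then t else t - 1, by unfold succAbove; split_ifs <;> omega⟩

section InsertMax

variable {a b : List ℕ} {M : ℕ}

lemma getD_insert_self : (a ++ M :: b).getD a.length 0 = M := by
  simp

lemma getD_insert_succAbove (t : ℕ) :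
    (a ++ M :: b).getD (succAbove a.length t) 0 = (a ++ b).getD t 0 := by
  unfold succAbove
  split_ifs with ht
  · rw [List.getD_append _ _ _ _ ht, List.getD_append _ _ _ _ ht]
  · rw [List.getD_append_right _ _ _ _ (by omega), List.getD_append_right _ _ _ _ (by omega),
      show t + 1 - a.length = t - a.length + 1 by omega, List.getD_cons_succ]

lemma isPinnacleAt_insert_succAbove_iff {t : ℕ} (ht : t + 1 < a.length ∨ a.length < t) :
    IsPinnacleAt (a ++ M :: b) (succAbove a.length t) ↔ IsPinnacleAt (a ++ b) t := by
  have hpred : succAbove a.length t - 1 = succAbove a.length (t - 1) := by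
    unfold succAbove; split_ifs <;> omega
  have hsucc : succAbove a.length t + 1 = succAbove a.length (t + 1) := by
    unfold succAbove; split_ifs <;> omega
  unfold IsPinnacleAt
  rw [hpred, hsucc, getD_insert_succAbove, getD_insert_succAbove, getD_insert_succAbove]
  simp only [List.length_append, List.length_cons, succAbove]
  split_ifs <;> omega

variable (hu : ∀ x ∈ a ++ b, x < M)
include hu

lemma getD_lt_of_forall_lt {t : ℕ} (ht : t < (a ++ b).length) : (a ++ b).getD t 0 < M := by
  rw [List.getD_eq_getElem _ _ ht]
  exact hu _ (List.getElem_mem ht)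

lemma isPinnacleAt_insert_self (ha : a ≠ []) (hb : b ≠ []) :
    IsPinnacleAt (a ++ M :: b) a.length := by
  have ha' := List.length_pos_iff.2 ha
  have hb' := List.length_pos_iff.2 hb
  have hpred : a.length - 1 = succAbove a.length (a.length - 1) := by
    unfold succAbove; split_ifs <;> omega
  have hsucc : a.length + 1 = succAbove a.length a.length := by simp [succAbove]
  refine ⟨ha', by simp only [List.length_append, List.length_cons]; omega, ?_, ?_⟩
  · rw [getD_insert_self, hpred, getD_insert_succAbove]
    exact getD_lt_of_forall_lt hu (by simp only [List.length_append]; omega)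
  · rw [getD_insert_self, hsucc, getD_insert_succAbove]
    exact getD_lt_of_forall_lt hu (by simp only [List.length_append]; omega)

lemma not_isPinnacleAt_insert_of_adjacent {t : ℕ} (ht : t + 1 = a.length ∨ t = a.length + 1) :
    ¬IsPinnacleAt (a ++ M :: b) t := by
  rintro ⟨h0, hlen, hpred, hsucc⟩
  rcases ht with ht | rfl
  · rw [ht, getD_insert_self] at hsucc
    have : t = succAbove a.length t := by simp [succAbove]; omega
    rw [this, getD_insert_succAbove] at hsucc
    exact lt_asymm hsucc (getD_lt_of_forall_lt hu (by simp only [List.length_append, List.length_cons] at hlen ⊢; omega))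
  · rw [Nat.add_sub_cancel, getD_insert_self] at hpred
    have : a.length + 1 = succAbove a.length a.length := by simp [succAbove]
    rw [this, getD_insert_succAbove] at hpred
    exact lt_asymm hpred (getD_lt_of_forall_lt hu (by simp only [List.length_append, List.length_cons] at hlen ⊢; omega))

lemma pinSet_insert (ha : a ≠ []) (hb : b ≠ []) :
    pinSet (a ++ M :: b) = insert a.length
      ({t ∈ pinSet (a ++ b) | t + 1 < a.length ∨ a.length < t}.map
        ⟨succAbove a.length, succAbove_injective _⟩) := by
  ext t
  simp only [mem_insert, mem_map, mem_filter, mem_pinSet, Function.Embedding.coeFn_mk]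
  constructor
  · intro ht
    refine or_iff_not_imp_left.2 fun htk => ?_
    obtain ⟨s, rfl⟩ := exists_succAbove_eq htk
    have hfar : s + 1 < a.length ∨ a.length < s := by
      by_contra hnear
      refine not_isPinnacleAt_insert_of_adjacent hu ?_ ht
      unfold succAbove at htk ⊢
      split_ifs at htk ⊢ <;> omega
    exact ⟨s, ⟨(isPinnacleAt_insert_succAbove_iff hfar).1 ht, hfar⟩, rfl⟩
  · rintro (rfl | ⟨s, ⟨hs, hfar⟩, rfl⟩)
    · exact isPinnacleAt_insert_self hu ha hb
    · exact (isPinnacleAt_insert_succAbove_iff hfar).2 hs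

lemma pinMultiset_insert (ha : a ≠ []) (hb : b ≠ []) :
    pinMultiset (a ++ M :: b) =
      M ::ₘ {t ∈ pinSet (a ++ b) | t + 1 < a.length ∨ a.length < t}.val.map
        ((a ++ b).getD · 0) := by
  rw [pinMultiset_eq_map_pinSet, pinSet_insert hu ha hb, insert_val_of_notMem, map_val,
    Multiset.map_cons, Multiset.map_map, getD_insert_self]
  · congr 1
    exact Multiset.map_congr rfl fun t _ => getD_insert_succAbove t
  · simp only [mem_map, mem_filter, Function.Embedding.coeFn_mk, not_exists, not_and]
    rintro s ⟨-, hfar⟩ h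
    unfold succAbove at h
    split_ifs at h <;> omega

lemma isPinnacleAt_insert_self_of_mem_pinMultiset (hM : M ∈ pinMultiset (a ++ M :: b)) :
    IsPinnacleAt (a ++ M :: b) a.length := by
  rw [pinMultiset_eq_map_pinSet, Multiset.mem_map] at hM
  obtain ⟨t, ht, hval⟩ := hM
  have ht := mem_pinSet.1 ht
  obtain rfl | htk := eq_or_ne t a.length
  · exact ht
  obtain ⟨s, rfl⟩ := exists_succAbove_eq htk
  rw [getD_insert_succAbove] at hval
  refine absurd hval (getD_lt_of_forall_lt hu ?_).ne
  have := ht.2.1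
  simp only [succAbove, List.length_append, List.length_cons] at this ⊢
  split_ifs at this <;> omega

lemma pinMultiset_insert_eq_cons_iff {P : Multiset ℕ}
    (hlen : (a ++ b).length = 2 * Multiset.card P + 2) :
    pinMultiset (a ++ M :: b) = M ::ₘ P ↔
      pinMultiset (a ++ b) = P ∧ IsFreeSlot (a ++ b) a.length := by
  constructor
  · intro h
    have hk := isPinnacleAt_insert_self_of_mem_pinMultiset hu (h ▸ Multiset.mem_cons_self M P)
    have ha : a ≠ [] := List.length_pos_iff.1 hk.1
    have hb : b ≠ [] := List.ne_nil_of_length_pos (by simpa using hk.2.1)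
    rw [pinMultiset_insert hu ha hb, Multiset.cons_inj_right] at h
    set F := {t ∈ pinSet (a ++ b) | t + 1 < a.length ∨ a.length < t}
    have hcard : #(pinSet (a ++ b)) ≤ #F := by
      have := card_pinSet_le hlen.le
      rwa [← h, Multiset.card_map, ← card_def] at this
    have hF : F = pinSet (a ++ b) := eq_of_subset_of_card_le (filter_subset _ _) hcard
    have hfar := filter_eq_self.1 hF
    rw [hF, ← pinMultiset_eq_map_pinSet] at h
    refine ⟨h, hk.1, by simpa using hk.2.1, fun hpred => ?_, fun hself => ?_⟩
    · have := hfar _ (mem_pinSet.2 hpred); omega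
    · have := hfar _ (mem_pinSet.2 hself); omega
  · rintro ⟨hP, h0, hlt, hpred, hself⟩
    have ha : a ≠ [] := List.length_pos_iff.1 h0
    have hb : b ≠ [] := List.ne_nil_of_length_pos (by simp only [List.length_append] at hlt; omega)
    rw [pinMultiset_insert hu ha hb, filter_true_of_mem, ← pinMultiset_eq_map_pinSet, hP]
    intro t ht
    have ht := mem_pinSet.1 ht
    by_contra hnear
    obtain rfl | rfl : t = a.length - 1 ∨ t = a.length := by omega
    exacts [hpred ht, hself ht]

end InsertMax

lemma perm_insert_append_singleton_iff {a b L : List ℕ} {M : ℕ} :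
    (a ++ M :: b).Perm (L ++ [M]) ↔ (a ++ b).Perm L := by
  rw [List.perm_middle.congr_left, (List.perm_append_singleton M L).congr_right, List.perm_cons]

lemma exists_eq_insert_of_perm_append_singleton {w L : List ℕ} {M : ℕ} (hM : M ∉ L)
    (hw : w.Perm (L ++ [M])) : ∃ a b, w = a ++ M :: b ∧ M ∉ a ∧ (a ++ b).Perm L := by
  obtain ⟨a, b, rfl⟩ := List.append_of_mem (a := M) (hw.mem_iff.2 (by simp))
  have hab := perm_insert_append_singleton_iff.1 hw
  exact ⟨a, b, rfl, fun ha => hM (hab.subset (List.mem_append_left b ha)), hab⟩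

lemma bijOn_erase_max {L : List ℕ} {P : Multiset ℕ} {M : ℕ} (hL : ∀ x ∈ L, x < M)
    (hlen : L.length = 2 * Multiset.card P + 2) :
    Set.BijOn (fun w : List ℕ => w.erase M)
      {w | w.Perm (L ++ [M]) ∧ pinMultiset w = M ::ₘ P} {u | u.Perm L ∧ pinMultiset u = P} := by
  have hML : M ∉ L := fun h => (hL M h).false
  have hinsert : ∀ {a b : List ℕ}, (a ++ b).Perm L →
      (pinMultiset (a ++ M :: b) = M ::ₘ P ↔
        pinMultiset (a ++ b) = P ∧ IsFreeSlot (a ++ b) a.length) := fun hab =>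
    pinMultiset_insert_eq_cons_iff (fun x hx => hL x (hab.subset hx)) (hab.length_eq.trans hlen)
  have herase : ∀ {a b : List ℕ}, M ∉ a → (a ++ M :: b).erase M = a ++ b := fun ha => by
    rw [List.erase_append_right _ ha, List.erase_cons_head]
  refine ⟨?_, ?_, ?_⟩
  · rintro w ⟨hw, hpin⟩
    obtain ⟨a, b, rfl, ha, hab⟩ := exists_eq_insert_of_perm_append_singleton hML hw
    simp only [Set.mem_ofPred_eq, herase ha]
    exact ⟨hab, ((hinsert hab).1 hpin).1⟩
  · rintro w₁ ⟨hw₁, hpin₁⟩ w₂ ⟨hw₂, hpin₂⟩ heq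
    obtain ⟨a₁, b₁, rfl, ha₁, hab₁⟩ := exists_eq_insert_of_perm_append_singleton hML hw₁
    obtain ⟨a₂, b₂, rfl, ha₂, hab₂⟩ := exists_eq_insert_of_perm_append_singleton hML hw₂
    simp only [herase ha₁, herase ha₂] at heq
    have hfree₁ := ((hinsert hab₁).1 hpin₁).2
    have hfree₂ := heq ▸ ((hinsert hab₂).1 hpin₂).2
    have huniq := existsUnique_isFreeSlot (u := a₁ ++ b₁) (by
      rw [← card_pinMultiset, ((hinsert hab₁).1 hpin₁).1, hab₁.length_eq, hlen])
    obtain ⟨rfl, rfl⟩ := List.append_inj heq (huniq.unique hfree₁ hfree₂)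
    rfl
  · rintro u ⟨hu, hpin⟩
    have hlenu : u.length = 2 * #(pinSet u) + 2 := by
      rw [← card_pinMultiset, hpin, hu.length_eq, hlen]
    obtain ⟨k, hk, -⟩ := existsUnique_isFreeSlot hlenu
    have hab : u.take k ++ u.drop k = u := List.take_append_drop k u
    have hk' : (u.take k).length = k := List.length_take_of_le hk.2.1.le
    have hu' : (u.take k ++ u.drop k).Perm L := by rwa [hab]
    refine ⟨u.take k ++ M :: u.drop k, ⟨perm_insert_append_singleton_iff.2 hu', ?_⟩, ?_⟩
    · rw [hinsert hu', hab, hk']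
      exact ⟨hpin, hk⟩
    · exact (herase fun h => hML (hu.subset (List.mem_of_mem_take h))).trans hab

theorem ncard_perm_append_max {L : List ℕ} {P : Multiset ℕ} {M : ℕ} (hL : ∀ x ∈ L, x < M)
    (hlen : L.length = 2 * Multiset.card P + 2) :
    {w : List ℕ | w.Perm (L ++ [M]) ∧ pinMultiset w = M ::ₘ P}.ncard =
      {u : List ℕ | u.Perm L ∧ pinMultiset u = P}.ncard := by
  have hbij := bijOn_erase_max hL hlen
  rw [← hbij.image_eq, hbij.injOn.ncard_image]

lemma card_blockPins (B : List Bool) : Multiset.card (blockPins B) = B.count true := by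
  have hB : (List.range B.length).map (B.getD · false) = B :=
    List.ext_getElem (by simp) fun i _ h => by simp [List.getElem?_eq_getElem h]
  conv_rhs => rw [← hB]
  rw [blockPins, Multiset.coe_card, List.length_map, ← List.countP_eq_length_filter,
    List.count, List.countP_map]
  simp [Function.comp_def]

lemma pB_zero_right (B : List Bool) (i : ℕ) :
    pB B i 0 = {w : List ℕ | w.Perm (List.range' 1 B.length ++ List.replicate i (B.length + 1)) ∧
      pinMultiset w = blockPins B + Multiset.replicate i (B.length + 1)}.ncard := by
  unfold pB
  congr 1
  ext w
  simp only [List.replicate_zero, List.append_nil, Set.mem_ofPred_eq]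
  refine ⟨fun h => ⟨h.1, h.2.1⟩, fun ⟨hw, hpin⟩ => ⟨hw, hpin, ?_⟩⟩
  rintro t ht ⟨h0, -⟩
  rw [List.getD_eq_getElem _ _ (by omega)] at h0
  have := hw.subset (h0 ▸ List.getElem_mem (by omega))
  simp [List.mem_range'_1] at this

theorem add_one_large_pinnacle (B : List Bool) (y : ℕ)
    (hones : B.count true = y) (hzeros : B.count false = y + 2) :
    pB B 0 0 = pB B 1 0 := by
  have hlen : B.length = 2 * y + 2 := by
    rw [← List.count_true_add_count_false]
    omega
  rw [pB_zero_right, pB_zero_right]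
  simp only [List.replicate_zero, List.append_nil, Multiset.replicate_zero, add_zero,
    List.replicate_one, Multiset.replicate_one, add_comm _ {_}, Multiset.singleton_add]
  refine (ncard_perm_append_max (fun x hx => ?_) ?_).symm
  · have := List.mem_range'_1.1 hx
    omega
  · rw [List.length_range', card_blockPins, hones, hlen]
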